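/- Let F : V × V × V → ℝ be a trilinear map satisfying F(X,Y,Z) = −F(X,Z,Y), F(X,JY,JZ) = −F(X,Y,Z), and F(JX,Y,Z) = −F(X,JY,Z) for all X, Y, Z ∈ V. If moreover F(X,X,Z) = 0 for all X, Z ∈ V, then F is identically zero. (This is the pointwise content of the statement that a Hermitian manifold that is nearly Kähler at a point is Kähler at that point.) -/
import Mathlib


open scoped RealInnerProductSpace

/-- The tensor π₁(X,Y,Z,U) = ⟪Y,Z⟫⟪X,U⟫ − ⟪X,Z⟫⟪Y,U⟫. -/
noncomputable def pi1 {V : Type*} [NormedAddCommGroup V] [InnerProductSpace ℝ V]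
    (X Y Z U : V) : ℝ :=
  ⟪Y, Z⟫ * ⟪X, U⟫ - ⟪X, Z⟫ * ⟪Y, U⟫

/-- The tensor π₂(X,Y,Z,U) = ⟪Y,JZ⟫⟪X,JU⟫ − ⟪X,JZ⟫⟪Y,JU⟫ − 2⟪X,JY⟫⟪Z,JU⟫. -/
noncomputable def pi2 {V : Type*} [NormedAddCommGroup V] [InnerProductSpace ℝ V]
    (J : V →ₗ[ℝ] V) (X Y Z U : V) : ℝ :=
  ⟪Y, J Z⟫ * ⟪X, J U⟫ - ⟪X, J Z⟫ * ⟪Y, J U⟫ - 2 * ⟪X, J Y⟫ * ⟪Z, J U⟫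

/-- The construction Ψ(Q) associated with a bilinear form `Q`. -/
noncomputable def Psi {V : Type*} [NormedAddCommGroup V] [InnerProductSpace ℝ V]
    (J : V →ₗ[ℝ] V) (Q : V → V → ℝ) (X Y Z U : V) : ℝ :=
  ⟪Y, J Z⟫ * Q X (J U) - ⟪X, J Z⟫ * Q Y (J U) - 2 * ⟪X, J Y⟫ * Q Z (J U)
    + ⟪X, J U⟫ * Q Y (J Z) - ⟪Y, J U⟫ * Q X (J Z) - 2 * ⟪Z, J U⟫ * Q X (J Y)

/-- `(X, Y)` is an antiholomorphic-orthonormal pair: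
`‖X‖ = ‖Y‖ = 1`, `⟪X,Y⟫ = 0` and `⟪X,JY⟫ = 0`. -/
def IsAntiholoON {V : Type*} [NormedAddCommGroup V] [InnerProductSpace ℝ V]
    (J : V →ₗ[ℝ] V) (X Y : V) : Prop :=
  ‖X‖ = 1 ∧ ‖Y‖ = 1 ∧ ⟪X, Y⟫ = 0 ∧ ⟪X, J Y⟫ = 0

/-- a trilinear `F` with the Hermitian symmetries which moreover
satisfies the nearly Kähler condition `F(X,X,Z) = 0` vanishes identically. -/
theorem stmt7 {V : Type*} [NormedAddCommGroup V] [InnerProductSpace ℝ V]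
    [FiniteDimensional ℝ V]
    (n : ℕ) (hn : 1 ≤ n) (hdim : Module.finrank ℝ V = 2 * n)
    (J : V →ₗ[ℝ] V) (hJ2 : ∀ X : V, J (J X) = -X)
    (hJO : ∀ X Y : V, ⟪J X, J Y⟫ = ⟪X, Y⟫)
    (F : V →ₗ[ℝ] V →ₗ[ℝ] V →ₗ[ℝ] ℝ)
    (hF1 : ∀ X Y Z : V, F X Y Z = - F X Z Y)
    (hF2 : ∀ X Y Z : V, F X (J Y) (J Z) = - F X Y Z)
    (hF3 : ∀ X Y Z : V, F (J X) Y Z = - F X (J Y) Z)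
    (hNK : ∀ X Z : V, F X X Z = 0) :
    ∀ X Y Z : V, F X Y Z = 0 := by
  have a12 : ∀ X Y Z : V, F X Y Z = - F Y X Z := by
    intro X Y Z
    have h := hNK (X + Y) Z
    simp only [map_add, LinearMap.add_apply, hNK] at h
    linarith
  have cyc : ∀ X Y Z : V, F X Y Z = F Y Z X := by
    intro X Y Z
    rw [a12 X Y Z, hF1 Y X Z]
    ring
  have hJJ : ∀ X Y Z : V, F (J X) (J Y) Z = F X Y Z := by
    intro X Y Z
    rw [hF3, hJ2, map_neg, LinearMap.neg_apply]
    ring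
  intro X Y Z
  have key : F X Y Z = - F X Y Z := by
    calc F X Y Z = - F X (J Y) (J Z) := by rw [hF2]; ring
    _ = - F (J Y) (J Z) X := by rw [cyc X (J Y) (J Z)]
    _ = - F Y Z X := by rw [hJJ]
    _ = - F X Y Z := by rw [← cyc]
  linarith
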